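/- arXiv:2101.02959 — 4 statements merged into one kernel-verified Lean document; each statement's English description precedes it below -/
import Mathlib

section
/- Assume χ C_m + τ c_l ≥ c > 0 for all l = 1,…,N_h, where c_l = ∂I_ion/∂v_l(v^{k-1}). Then the Jacobian bilinear form a(s,φ) = χC_m ⟨s_i − s_e, φ_i − φ_e⟩ + τ a_i(s_i, φ_i) + τ a_e(s_e, φ_e) + τ ⟨Σ_l c_l (s_{i,l} − s_{e,l}) ψ_l, φ_i − φ_e⟩ is coercive with respect to the norm ‖u‖_τ² = (1+τ)‖u_i − u_e‖_{L²(Ω)}² + τ a_i(u_i,u_i) + τ a_e(u_e,u_e): there exists a constant α > 0 such that a(s,s) ≥ α ‖s‖_τ² for all s = (s_i, s_e) ∈ V_h × V_h. -/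
/-! Because the mass matrix `M` is diagonal (lumped) with nonnegative entries, the mass and
reaction terms combine into one diagonal form with weights `χ Cm + τ c_l ≥ c`, which dominates
`c` times the mass form. The stiffness terms are nonnegative, so `α = min (c / (1 + τ)) 1` works. -/

open Matrix

namespace Matrix

variable {n : Type*} [Fintype n]

theorem IsDiag.dotProduct_mulVec {M : Matrix n n ℝ} (hM : M.IsDiag) (v w : n → ℝ) :
    v ⬝ᵥ M *ᵥ w = ∑ i, M i i * v i * w i := by
  classical
  conv_lhs => rw [← hM.diagonal_diag]
  simp only [dotProduct, mulVec_diagonal, diag_apply]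
  exact Finset.sum_congr rfl fun i _ => by ring

theorem IsDiag.mul_dotProduct_mulVec_le {M : Matrix n n ℝ} (hM : M.PosSemidef) (hMd : M.IsDiag)
    {c : ℝ} {w : n → ℝ} (hw : ∀ i, c ≤ w i) (d : n → ℝ) :
    c * (d ⬝ᵥ M *ᵥ d) ≤ (w * d) ⬝ᵥ M *ᵥ d := by
  rw [hMd.dotProduct_mulVec, hMd.dotProduct_mulVec, Finset.mul_sum]
  refine Finset.sum_le_sum fun i _ => ?_
  have hsq : 0 ≤ M i i * (d i * d i) := mul_nonneg hM.diag_nonneg (mul_self_nonneg _)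
  calc c * (M i i * d i * d i) = c * (M i i * (d i * d i)) := by ring
    _ ≤ w i * (M i i * (d i * d i)) := mul_le_mul_of_nonneg_right (hw i) hsq
    _ = M i i * (w * d) i * d i := by simp only [Pi.mul_apply]; ring

end Matrix

theorem coercive_of_le {c τ α q m a b : ℝ} (hτ : 0 ≤ τ) (ha : 0 ≤ a) (hb : 0 ≤ b)
    (hq : 0 ≤ q) (hm : c * q ≤ m) (hα : α * (1 + τ) ≤ c) (hα₁ : α ≤ 1) :
    α * ((1 + τ) * q + τ * a + τ * b) ≤ m + τ * a + τ * b := by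
  have hτa : 0 ≤ τ * a := mul_nonneg hτ ha
  have hτb : 0 ≤ τ * b := mul_nonneg hτ hb
  nlinarith [mul_le_mul_of_nonneg_right hα hq, mul_le_mul_of_nonneg_right hα₁ hτa,
    mul_le_mul_of_nonneg_right hα₁ hτb]

theorem jacobian_form_coercive_general (N : ℕ) (χ Cm τ c : ℝ)
    (hτ : 0 < τ) (hc : 0 < c)
    (M Ai Ae : Matrix (Fin N) (Fin N) ℝ)
    (hM : M.PosDef) (hMdiag : M.IsDiag)
    (hAi : Ai.PosSemidef) (hAe : Ae.PosSemidef)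
    (cl : Fin N → ℝ) (hcl : ∀ l, χ * Cm + τ * cl l ≥ c) :
    ∃ α > 0, ∀ si se : Fin N → ℝ,
      χ * Cm * ((si - se) ⬝ᵥ M *ᵥ (si - se))
        + τ * (si ⬝ᵥ Ai *ᵥ si) + τ * (se ⬝ᵥ Ae *ᵥ se)
        + τ * ((fun l => cl l * (si - se) l) ⬝ᵥ M *ᵥ (si - se))
      ≥ α * ((1 + τ) * ((si - se) ⬝ᵥ M *ᵥ (si - se))
        + τ * (si ⬝ᵥ Ai *ᵥ si) + τ * (se ⬝ᵥ Ae *ᵥ se)) := by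
  have hτ₁ : 0 < 1 + τ := by linarith
  refine ⟨min (c / (1 + τ)) 1, lt_min (div_pos hc hτ₁) one_pos, fun si se => ?_⟩
  have hα : min (c / (1 + τ)) 1 * (1 + τ) ≤ c :=
    (le_div_iff₀ hτ₁).mp (min_le_left _ _)
  have hMpart : c * ((si - se) ⬝ᵥ M *ᵥ (si - se)) ≤ χ * Cm * ((si - se) ⬝ᵥ M *ᵥ (si - se))
      + τ * ((fun l => cl l * (si - se) l) ⬝ᵥ M *ᵥ (si - se)) := by
    have hweights : (fun l => χ * Cm + τ * cl l) * (si - se)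
        = (χ * Cm) • (si - se) + τ • fun l => cl l * (si - se) l := by
      ext l; simp only [Pi.mul_apply, Pi.add_apply, Pi.smul_apply, smul_eq_mul]; ring
    have := hMdiag.mul_dotProduct_mulVec_le hM.posSemidef hcl (si - se)
    rwa [hweights, add_dotProduct, smul_dotProduct, smul_dotProduct, smul_eq_mul,
      smul_eq_mul] at this
  have hq : 0 ≤ (si - se) ⬝ᵥ M *ᵥ (si - se) := by
    simpa using hM.posSemidef.dotProduct_mulVec_nonneg (si - se)
  have ha : 0 ≤ si ⬝ᵥ Ai *ᵥ si := by simpa using hAi.dotProduct_mulVec_nonneg si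
  have hb : 0 ≤ se ⬝ᵥ Ae *ᵥ se := by simpa using hAe.dotProduct_mulVec_nonneg se
  linarith [coercive_of_le hτ.le ha hb hq hMpart hα (min_le_right _ _)]

/-- Coercivity of the Jacobian bilinear form with respect to the ‖·‖_τ norm. -/
theorem jacobian_form_coercive (N : ℕ) (χ Cm τ c : ℝ)
    (hχ : 0 < χ) (hCm : 0 < Cm) (hτ : 0 < τ) (hc : 0 < c)
    (M Ai Ae : Matrix (Fin N) (Fin N) ℝ)
    (hM : M.PosDef) (hMdiag : M.IsDiag)
    (hAi : Ai.PosSemidef) (hAe : Ae.PosSemidef)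
    (cl : Fin N → ℝ) (hcl : ∀ l, χ * Cm + τ * cl l ≥ c) :
    ∃ α > 0, ∀ si se : Fin N → ℝ,
      χ * Cm * ((si - se) ⬝ᵥ M *ᵥ (si - se))
        + τ * (si ⬝ᵥ Ai *ᵥ si) + τ * (se ⬝ᵥ Ae *ᵥ se)
        + τ * ((fun l => cl l * (si - se) l) ⬝ᵥ M *ᵥ (si - se))
      ≥ α * ((1 + τ) * ((si - se) ⬝ᵥ M *ᵥ (si - se))
        + τ * (si ⬝ᵥ Ai *ᵥ si) + τ * (se ⬝ᵥ Ae *ᵥ se)) :=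
  jacobian_form_coercive_general N χ Cm τ c hτ hc M Ai Ae hM hMdiag hAi hAe cl hcl
end

section
/- Let A and B be symmetric positive definite n×n real matrices. Then for every vector u, the vector v = (A+B)^{-1} B u satisfies vᵀ A v ≤ uᵀ B u. (This is the key deluxe-scaling inequality arising from the generalized eigenvalue problem A φ = λ B φ.) -/
open Matrix

/-!
If `(A + B) v = B u` with `B` symmetric, then expanding `(u - v)ᵀ B (u - v)` and using
`uᵀ B v = vᵀ (A + B) v` gives the energy identity
`uᵀ B u = 2 vᵀ A v + vᵀ B v + (u - v)ᵀ B (u - v)`.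
When `A` and `B` are positive semidefinite every term on the right is nonnegative,
so `vᵀ A v ≤ uᵀ B u`.
-/

namespace Matrix

variable {ι R : Type*} [Fintype ι]

lemma IsSymm.dotProduct_mulVec_comm [CommSemiring R] {B : Matrix ι ι R} (hB : B.IsSymm)
    (x y : ι → R) : x ⬝ᵥ B *ᵥ y = y ⬝ᵥ B *ᵥ x := by
  rw [dotProduct_mulVec, ← mulVec_transpose, hB.eq, dotProduct_comm]

lemma dotProduct_mulVec_eq_of_add_mulVec_eq [CommRing R] {A B : Matrix ι ι R} (hB : B.IsSymm)
    {u v : ι → R} (h : (A + B) *ᵥ v = B *ᵥ u) :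
    u ⬝ᵥ B *ᵥ u = 2 * (v ⬝ᵥ A *ᵥ v) + v ⬝ᵥ B *ᵥ v + (u - v) ⬝ᵥ B *ᵥ (u - v) := by
  have hcross : v ⬝ᵥ B *ᵥ u = v ⬝ᵥ A *ᵥ v + v ⬝ᵥ B *ᵥ v := by
    rw [← h, add_mulVec, dotProduct_add]
  rw [mulVec_sub, dotProduct_sub, sub_dotProduct, sub_dotProduct, hB.dotProduct_mulVec_comm u v,
    hcross]
  ring

lemma dotProduct_mulVec_le_of_add_mulVec_eq {A B : Matrix ι ι ℝ} (hA : A.PosSemidef)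
    (hB : B.PosSemidef) {u v : ι → ℝ} (h : (A + B) *ᵥ v = B *ᵥ u) :
    v ⬝ᵥ A *ᵥ v ≤ u ⬝ᵥ B *ᵥ u := by
  have hBsymm : B.IsSymm := by simpa using hB.isHermitian
  have hAv : 0 ≤ v ⬝ᵥ A *ᵥ v := by simpa using hA.dotProduct_mulVec_nonneg v
  have hBv : 0 ≤ v ⬝ᵥ B *ᵥ v := by simpa using hB.dotProduct_mulVec_nonneg v
  have hBuv : 0 ≤ (u - v) ⬝ᵥ B *ᵥ (u - v) := by simpa using hB.dotProduct_mulVec_nonneg (u - v)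
  rw [dotProduct_mulVec_eq_of_add_mulVec_eq hBsymm h]
  linarith

end Matrix

/-- Key deluxe-scaling inequality: for SPD A, B and v = (A+B)⁻¹ B u, vᵀ A v ≤ uᵀ B u. -/
theorem deluxe_scaling_inequality (n : ℕ) (A B : Matrix (Fin n) (Fin n) ℝ)
    (hA : A.PosDef) (hB : B.PosDef) (u : Fin n → ℝ) :
    ((A + B)⁻¹ *ᵥ (B *ᵥ u)) ⬝ᵥ A *ᵥ ((A + B)⁻¹ *ᵥ (B *ᵥ u)) ≤ u ⬝ᵥ B *ᵥ u := by
  have hdet : IsUnit (A + B).det := (hA.add hB).det_pos.ne'.isUnit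
  refine dotProduct_mulVec_le_of_add_mulVec_eq hA.posSemidef hB.posSemidef ?_
  rw [mulVec_mulVec, mul_nonsing_inv _ hdet, one_mulVec]
end

section
/- Let A and B be symmetric positive definite n×n real matrices and set D_A = (A+B)^{-1}A, D_B = (A+B)^{-1}B. Then D_A + D_B = I and for every u ∈ ℝⁿ, (D_B u)ᵀ A (D_B u) + (D_A u)ᵀ B (D_A u) ≤ uᵀ (A^{-1} + B^{-1})^{-1} u ≤ min(uᵀAu, uᵀBu). -/
/-!
With `S = A + B`, the parallel sum is `(A⁻¹ + B⁻¹)⁻¹ = (A⁻¹ S B⁻¹)⁻¹ = B S⁻¹ A`, and writing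
`A = S - B` (or `B = S - A`) shows `B S⁻¹ A = A S⁻¹ B = A - A S⁻¹ A = B - B S⁻¹ B`.
The energy of the deluxe-scaled vector is then `P S⁻¹ B + P S⁻¹ A = P` for `P = B S⁻¹ A`,
so the first inequality is an equality, while `A - P = A S⁻¹ A` and `B - P = B S⁻¹ B` are
congruent to `S⁻¹ > 0`, which gives the Loewner bounds `P ≤ A` and `P ≤ B`.
-/

open Matrix
open scoped MatrixOrder ComplexOrder

namespace Matrix

section Algebra

variable {n R : Type*} [Fintype n] [DecidableEq n] [CommRing R] {A B : Matrix n n R}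

lemma inv_add_mul_add_inv_add_mul (h : IsUnit (A + B).det) :
    (A + B)⁻¹ * A + (A + B)⁻¹ * B = 1 := by
  rw [← mul_add, nonsing_inv_mul _ h]

lemma mul_inv_add_mul_eq_sub (h : IsUnit (A + B).det) :
    B * (A + B)⁻¹ * A = B - B * (A + B)⁻¹ * B := by
  calc B * (A + B)⁻¹ * A = B * (A + B)⁻¹ * ((A + B) - B) := by rw [add_sub_cancel_right]
    _ = B - B * (A + B)⁻¹ * B := by rw [mul_sub, mul_assoc, nonsing_inv_mul _ h, mul_one]

lemma mul_inv_add_mul_eq_sub' (h : IsUnit (A + B).det) :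
    A * (A + B)⁻¹ * B = B - B * (A + B)⁻¹ * B := by
  calc A * (A + B)⁻¹ * B = ((A + B) - B) * (A + B)⁻¹ * B := by rw [add_sub_cancel_right]
    _ = B - B * (A + B)⁻¹ * B := by rw [sub_mul, sub_mul, mul_nonsing_inv _ h, one_mul]

lemma mul_inv_add_mul_comm (h : IsUnit (A + B).det) :
    A * (A + B)⁻¹ * B = B * (A + B)⁻¹ * A :=
  (mul_inv_add_mul_eq_sub' h).trans (mul_inv_add_mul_eq_sub h).symm

lemma inv_add_inv_inv (hA : IsUnit A.det) (hB : IsUnit B.det) :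
    (A⁻¹ + B⁻¹)⁻¹ = B * (A + B)⁻¹ * A := by
  have : A⁻¹ + B⁻¹ = A⁻¹ * (A + B) * B⁻¹ := by
    rw [mul_add, add_mul, nonsing_inv_mul _ hA, one_mul, mul_assoc, mul_nonsing_inv _ hB,
      mul_one, add_comm]
  rw [this, mul_inv_rev, mul_inv_rev, nonsing_inv_nonsing_inv _ hA,
    nonsing_inv_nonsing_inv _ hB, mul_assoc]

lemma sub_inv_add_inv_inv_left (hA : IsUnit A.det) (hB : IsUnit B.det)
    (h : IsUnit (A + B).det) : A - (A⁻¹ + B⁻¹)⁻¹ = A * (A + B)⁻¹ * A := by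
  have hBA : A * (B + A)⁻¹ * B = A - A * (B + A)⁻¹ * A :=
    mul_inv_add_mul_eq_sub (add_comm A B ▸ h)
  rw [inv_add_inv_inv hA hB, ← mul_inv_add_mul_comm h, add_comm A B, hBA, sub_sub_cancel]

lemma sub_inv_add_inv_inv_right (hA : IsUnit A.det) (hB : IsUnit B.det)
    (h : IsUnit (A + B).det) : B - (A⁻¹ + B⁻¹)⁻¹ = B * (A + B)⁻¹ * B := by
  rw [inv_add_inv_inv hA hB, mul_inv_add_mul_eq_sub h, sub_sub_cancel]

lemma transpose_mul_mul_add_transpose_mul_mul (hAs : A.IsSymm) (hBs : B.IsSymm)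
    (h : IsUnit (A + B).det) :
    ((A + B)⁻¹ * B)ᵀ * A * ((A + B)⁻¹ * B) + ((A + B)⁻¹ * A)ᵀ * B * ((A + B)⁻¹ * A) =
      B * (A + B)⁻¹ * A := by
  have hSs : ((A + B)⁻¹)ᵀ = (A + B)⁻¹ := (hAs.add hBs).inv.eq
  simp only [transpose_mul, hAs.eq, hBs.eq, hSs]
  rw [mul_inv_add_mul_comm h, ← mul_add, ← mul_add, add_comm B A, nonsing_inv_mul _ h, mul_one]

end Algebra

lemma mulVec_dotProduct_mulVec_mulVec {n R : Type*} [Fintype n] [CommSemiring R]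
    (M A : Matrix n n R) (u : n → R) :
    (M *ᵥ u) ⬝ᵥ A *ᵥ (M *ᵥ u) = u ⬝ᵥ (Mᵀ * A * M) *ᵥ u := by
  rw [dotProduct_mulVec, vecMul_mulVec, ← dotProduct_mulVec, mulVec_mulVec]

lemma dotProduct_mulVec_le_of_le {n : Type*} [Fintype n] {M N : Matrix n n ℝ} (h : M ≤ N)
    (u : n → ℝ) : u ⬝ᵥ M *ᵥ u ≤ u ⬝ᵥ N *ᵥ u := by
  have := (le_iff.1 h).dotProduct_mulVec_nonneg u
  rw [star_trivial, sub_mulVec, dotProduct_sub, sub_nonneg] at this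
  exact this

section Loewner

variable {n 𝕜 : Type*} [Fintype n] [DecidableEq n] [RCLike 𝕜] {A B : Matrix n n 𝕜}

lemma PosDef.isUnit_det (hA : A.PosDef) : IsUnit A.det :=
  (isUnit_iff_isUnit_det A).1 hA.isUnit

lemma PosDef.inv_add_inv_inv_le_left (hA : A.PosDef) (hB : B.PosDef) : (A⁻¹ + B⁻¹)⁻¹ ≤ A := by
  rw [le_iff, sub_inv_add_inv_inv_left hA.isUnit_det hB.isUnit_det (hA.add hB).isUnit_det]
  simpa only [hA.isHermitian.eq] using
    (hA.add hB).inv.posSemidef.conjTranspose_mul_mul_same A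

lemma PosDef.inv_add_inv_inv_le_right (hA : A.PosDef) (hB : B.PosDef) : (A⁻¹ + B⁻¹)⁻¹ ≤ B := by
  rw [le_iff, sub_inv_add_inv_inv_right hA.isUnit_det hB.isUnit_det (hA.add hB).isUnit_det]
  simpa only [hB.isHermitian.eq] using
    (hA.add hB).inv.posSemidef.conjTranspose_mul_mul_same B

end Loewner

end Matrix

/-- Deluxe scaling matrices sum to the identity and satisfy the parallel-sum bound. -/
theorem deluxe_parallel_sum_bound (n : ℕ) (A B : Matrix (Fin n) (Fin n) ℝ)
    (hA : A.PosDef) (hB : B.PosDef) :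
    (A + B)⁻¹ * A + (A + B)⁻¹ * B = 1 ∧
    ∀ u : Fin n → ℝ,
      (((A + B)⁻¹ * B) *ᵥ u) ⬝ᵥ A *ᵥ (((A + B)⁻¹ * B) *ᵥ u)
          + (((A + B)⁻¹ * A) *ᵥ u) ⬝ᵥ B *ᵥ (((A + B)⁻¹ * A) *ᵥ u)
        ≤ u ⬝ᵥ (A⁻¹ + B⁻¹)⁻¹ *ᵥ u ∧
      u ⬝ᵥ (A⁻¹ + B⁻¹)⁻¹ *ᵥ u ≤ min (u ⬝ᵥ A *ᵥ u) (u ⬝ᵥ B *ᵥ u) := by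
  have hAB := (hA.add hB).isUnit_det
  have hAs : A.IsSymm := isHermitian_iff_isSymm.1 hA.isHermitian
  have hBs : B.IsSymm := isHermitian_iff_isSymm.1 hB.isHermitian
  refine ⟨inv_add_mul_add_inv_add_mul hAB, fun u => ⟨le_of_eq ?_, le_min ?_ ?_⟩⟩
  · rw [mulVec_dotProduct_mulVec_mulVec, mulVec_dotProduct_mulVec_mulVec, ← dotProduct_add,
      ← add_mulVec, transpose_mul_mul_add_transpose_mul_mul hAs hBs hAB,
      inv_add_inv_inv hA.isUnit_det hB.isUnit_det]
  · exact dotProduct_mulVec_le_of_le (hA.inv_add_inv_inv_le_left hB) u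
  · exact dotProduct_mulVec_le_of_le (hA.inv_add_inv_inv_le_right hB) u
end

section
/- Let M^{-1} = R_Dᵀ S̃^{-1} R_D be the BDDC preconditioner and Ŝ = Rᵀ S R the assembled Schur complement, where R, R_D satisfy R_Dᵀ R = I on the continuous space Ŵ (i.e., the averaging operator E_D = R R_Dᵀ restricted appropriately is a projection onto Ŵ with E_D R = R). If |E_D u|²_{S̃} ≤ C |u|²_{S̃} for all u in the partially assembled space W̃, then the eigenvalues of the preconditioned operator M^{-1}Ŝ satisfy 1 ≤ λ ≤ C, hence cond(M^{-1}Ŝ) ≤ C. -/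
/-!
Let `M⁻¹Ŝ x = μ x` with `x ≠ 0`, put `v = R x` and let `u = S̃⁻¹ R_D Rᵀ S̃ v` be the vector whose
average `R_Dᵀ u` is `μ x`. In the `S̃`-inner product, `⟨u, w⟩ = ⟨R_Dᵀ w, Rᵀ S̃ v⟩` for every `w`, so
with `s = |v|²_{S̃} > 0` one gets `|u|² = μ s` and `⟨u, v⟩ = s` (using `R_Dᵀ R = I`).
Then `0 ≤ |u - v|² = (μ - 1) s` gives `1 ≤ μ`, and `E_D u = R R_Dᵀ u = μ v` turns the hypothesis
`|E_D u|² ≤ C |u|²` into `μ² s ≤ C μ s`, i.e. `μ ≤ C`.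
-/

open Matrix

namespace Matrix

variable {m n α : Type*} [Fintype m] [Fintype n]

lemma IsSymm.nonsing_inv_mulVec_dotProduct_mulVec [CommRing α] [DecidableEq n]
    {S : Matrix n n α} (hS : S.IsSymm) (hSu : IsUnit S) (B : Matrix n m α) (y : m → α)
    (w : n → α) : (S⁻¹ *ᵥ B *ᵥ y) ⬝ᵥ S *ᵥ w = y ⬝ᵥ Bᵀ *ᵥ w := by
  rw [dotProduct_mulVec, ← mulVec_transpose, hS.eq, mulVec_mulVec,
    mul_nonsing_inv S ((isUnit_iff_isUnit_det S).mp hSu), one_mulVec,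
    dotProduct_transpose_mulVec, dotProduct_comm]

lemma PosSemidef.two_mul_dotProduct_mulVec_le {S : Matrix n n ℝ} (hS : S.PosSemidef)
    (u v : n → ℝ) : 2 * (u ⬝ᵥ S *ᵥ v) ≤ u ⬝ᵥ S *ᵥ u + v ⬝ᵥ S *ᵥ v := by
  have hsymm : v ⬝ᵥ S *ᵥ u = u ⬝ᵥ S *ᵥ v := by
    rw [← dotProduct_transpose_mulVec, (isHermitian_iff_isSymm.mp hS.isHermitian).eq]
  have hnonneg := hS.dotProduct_mulVec_nonneg (u - v)
  simp only [star_trivial, mulVec_sub, sub_dotProduct, dotProduct_sub, hsymm] at hnonneg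
  linarith

end Matrix

/-- Abstract BDDC condition number theorem: if the averaging operator E_D = R R_Dᵀ
satisfies |E_D u|²_{S̃} ≤ C |u|²_{S̃} on the partially assembled space, then all
eigenvalues of the preconditioned operator M⁻¹Ŝ = (R_Dᵀ S̃⁻¹ R_D)(Rᵀ S̃ R) lie
in [1, C]. -/
theorem bddc_eigenvalue_bounds (N M : ℕ)
    (St : Matrix (Fin N) (Fin N) ℝ) (hSt : St.PosDef)
    (R RD : Matrix (Fin N) (Fin M) ℝ) (hRD : RDᵀ * R = 1)
    (C : ℝ)
    (hE : ∀ u : Fin N → ℝ,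
      ((R * RDᵀ) *ᵥ u) ⬝ᵥ St *ᵥ ((R * RDᵀ) *ᵥ u) ≤ C * (u ⬝ᵥ St *ᵥ u)) :
    ∀ μ : ℝ,
      Module.End.HasEigenvalue
        (Matrix.toLin' ((RDᵀ * St⁻¹ * RD) * (Rᵀ * St * R))) μ →
      1 ≤ μ ∧ μ ≤ C := by
  intro μ hμ
  obtain ⟨x, hx_mem, hx_ne⟩ := hμ.exists_hasEigenvector
  set v := R *ᵥ x
  set y := Rᵀ *ᵥ St *ᵥ v
  set u := St⁻¹ *ᵥ RD *ᵥ y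
  set s := x ⬝ᵥ y with hs_def
  have hu : RDᵀ *ᵥ u = μ • x := by
    simpa [toLin'_apply, ← mulVec_mulVec, Matrix.mul_assoc] using
      Module.End.mem_eigenspace_iff.mp hx_mem
  have hv : RDᵀ *ᵥ v = x := by rw [mulVec_mulVec, hRD, one_mulVec]
  have energy : ∀ w, u ⬝ᵥ St *ᵥ w = y ⬝ᵥ RDᵀ *ᵥ w :=
    (isHermitian_iff_isSymm.mp hSt.isHermitian).nonsing_inv_mulVec_dotProduct_mulVec
      hSt.isUnit RD y
  have hvv : v ⬝ᵥ St *ᵥ v = s := by rw [hs_def, dotProduct_transpose_mulVec, dotProduct_comm]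
  have huv : u ⬝ᵥ St *ᵥ v = s := by rw [energy, hv, dotProduct_comm]
  have huu : u ⬝ᵥ St *ᵥ u = μ * s := by
    rw [energy, hu, dotProduct_smul, dotProduct_comm, smul_eq_mul]
  have hs : 0 < s := by
    have hv_ne : v ≠ 0 := fun h => hx_ne (by rw [← hv, h, mulVec_zero])
    simpa [hvv] using hSt.dotProduct_mulVec_pos hv_ne
  have hlower : 1 ≤ μ := by
    have := hSt.posSemidef.two_mul_dotProduct_mulVec_le u v
    rw [huv, huu, hvv] at this
    exact le_of_mul_le_mul_right (by linarith) hs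
  have hEu : (R * RDᵀ) *ᵥ u = μ • v := by rw [← mulVec_mulVec, hu, mulVec_smul]
  have hupper := hE u
  rw [hEu, mulVec_smul, smul_dotProduct, dotProduct_smul, hvv, huu, smul_eq_mul,
    smul_eq_mul] at hupper
  exact ⟨hlower, le_of_mul_le_mul_right hupper (mul_pos (zero_lt_one.trans_le hlower) hs)⟩
end
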